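/- arXiv:0909.4099 — 4 statements merged into one kernel-verified Lean document; each statement's English description precedes it below -/
import Mathlib

section
/- Let k ≥ 0 be an integer and let q be a real number with q > 1. If [2]·([4k+7] − [4k+5] − [4k+3]) = [4k+6] − [4k+4], then [3]·[4k+4] = [4k+8]. -/
/-! Writing `n = 4k + 4`, the recurrence `[2][m] = [m+1] + [m-1]` turns the hypothesis into
`[n+4] = [n+2] + [n] + [n-2]`, and the same recurrence applied twice (with `[1][m] = [m]`) gives
`[3][n] = [n+2] + [n] + [n-2]`. Both recurrences are Laurent polynomial identities in `q`; where
`q - q⁻¹ = 0` they still hold, since then every `[m]` is `0` by the convention `x / 0 = 0`. -/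

section QuantumInt

variable {K : Type*} [Field K]

def quantumInt (q : K) (m : ℤ) : K := (q ^ m - q ^ (-m)) / (q - q⁻¹)

theorem quantumInt_one_mul (q : K) (m : ℤ) :
    quantumInt q 1 * quantumInt q m = quantumInt q m := by
  by_cases hs : q - q⁻¹ = 0
  · simp [quantumInt, hs]
  · rw [quantumInt, zpow_one, zpow_neg_one, div_self hs, one_mul]

theorem quantumInt_two_mul (q : K) (m : ℤ) :
    quantumInt q 2 * quantumInt q m = quantumInt q (m + 1) + quantumInt q (m - 1) := by
  by_cases hs : q - q⁻¹ = 0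
  · simp [quantumInt, hs]
  have hq : q ≠ 0 := by rintro rfl; simp at hs
  have key : (q ^ (2 : ℤ) - q ^ (-2 : ℤ)) * (q ^ m - q ^ (-m)) =
      (q - q⁻¹) * ((q ^ (m + 1) - q ^ (-(m + 1))) + (q ^ (m - 1) - q ^ (-(m - 1)))) := by
    simp only [zpow_add₀ hq, zpow_sub₀ hq, zpow_neg, zpow_ofNat]
    field_simp
    ring
  rw [quantumInt, quantumInt, div_mul_div_comm, key, quantumInt, quantumInt, ← add_div]
  field_simp

theorem quantumInt_two_mul_of_eq (q : K) (a b c : ℤ) (hb : b = a + 1) (hc : c = a - 1) :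
    quantumInt q 2 * quantumInt q a = quantumInt q b + quantumInt q c := by
  rw [hb, hc]
  exact quantumInt_two_mul q a

theorem quantumInt_three_mul (q : K) (m : ℤ) :
    quantumInt q 3 * quantumInt q m =
      quantumInt q (m + 2) + quantumInt q m + quantumInt q (m - 2) := by
  linear_combination -quantumInt q m * quantumInt_two_mul_of_eq q 2 3 1 rfl rfl
    + quantumInt q 2 * quantumInt_two_mul q m
    + quantumInt_two_mul_of_eq q (m + 1) (m + 2) m (by ring) (by ring)
    + quantumInt_two_mul_of_eq q (m - 1) m (m - 2) (by ring) (by ring)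
    - quantumInt_one_mul q m

theorem quantumInt_three_mul_eq_of_two_mul (q : K) (n : ℤ)
    (h : quantumInt q 2 *
        (quantumInt q (n + 3) - quantumInt q (n + 1) - quantumInt q (n - 1)) =
      quantumInt q (n + 2) - quantumInt q n) :
    quantumInt q 3 * quantumInt q n = quantumInt q (n + 4) := by
  linear_combination quantumInt_three_mul q n - h
    + quantumInt_two_mul_of_eq q (n + 3) (n + 4) (n + 2) (by ring) (by ring)
    - quantumInt_two_mul_of_eq q (n + 1) (n + 2) n (by ring) (by ring)
    - quantumInt_two_mul_of_eq q (n - 1) n (n - 2) (by ring) (by ring)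

end QuantumInt

theorem stmt_0_general (k : ℕ) (q : ℝ)
    (qi : ℕ → ℝ) (hqi : ∀ m : ℕ, qi m = (q ^ (m : ℤ) - q ^ (-(m : ℤ))) / (q - q⁻¹))
    (h : qi 2 * (qi (4 * k + 7) - qi (4 * k + 5) - qi (4 * k + 3))
        = qi (4 * k + 6) - qi (4 * k + 4)) :
    qi 3 * qi (4 * k + 4) = qi (4 * k + 8) := by
  set n : ℤ := 4 * k + 4
  have hQ (m : ℕ) (e : ℤ) (he : (m : ℤ) = e) : qi m = quantumInt q e := he ▸ hqi m
  rw [hQ 2 2 rfl, hQ (4 * k + 7) (n + 3) (by omega), hQ (4 * k + 5) (n + 1) (by omega),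
    hQ (4 * k + 3) (n - 1) (by omega), hQ (4 * k + 6) (n + 2) (by omega),
    hQ (4 * k + 4) n (by omega)] at h
  rw [hQ 3 3 rfl, hQ (4 * k + 4) n (by omega), hQ (4 * k + 8) (n + 4) (by omega)]
  exact quantumInt_three_mul_eq_of_two_mul q n h

/-- Lemma 2.4 of "Constructing the extended Haagerup planar algebra":
if `[2]·([4k+7] − [4k+5] − [4k+3]) = [4k+6] − [4k+4]` then `[3]·[4k+4] = [4k+8]`,
where `[m]` is the quantum integer for a real `q > 1`. -/
theorem stmt_0 (k : ℕ) (q : ℝ) (hq : 1 < q)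
    (qi : ℕ → ℝ) (hqi : ∀ m : ℕ, qi m = (q ^ (m : ℤ) - q ^ (-(m : ℤ))) / (q - q⁻¹))
    (h : qi 2 * (qi (4 * k + 7) - qi (4 * k + 5) - qi (4 * k + 3))
        = qi (4 * k + 6) - qi (4 * k + 4)) :
    qi 3 * qi (4 * k + 4) = qi (4 * k + 8) :=
  stmt_0_general k q qi hqi h
end

section
/- Let q be a real number with q > 1 and let n ≥ 2 be an integer such that [n+4] = [3]·[n]. Then ([2]·[2n+2]²·[2n+4]/([n+1]·[n+2]²·[2n+3])) · ([n+1]²·[2n+2]·([n+3] − [2]·[n])/([2]·[n]²·[2n+3])) = ([2n+2]²/([n+2]·[2n+3]))². Equivalently, [2n+4]·[n+1]·([n+3] − [2]·[n]) = [2n+2]·[n]². -/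
lemma stmt_10_aux (a b q r : ℝ) (hab : a * b = 1) (hqr : q * r = 1)
    (H : (a * q ^ 4 - b * r ^ 4) * (q - r) = (q ^ 3 - r ^ 3) * (a - b)) :
    (a ^ 2 * q ^ 4 - b ^ 2 * r ^ 4) * (a * q - b * r) *
        ((q - r) * (a * q ^ 3 - b * r ^ 3) - (q ^ 2 - r ^ 2) * (a - b))
      = (q - r) * (a ^ 2 * q ^ 2 - b ^ 2 * r ^ 2) * (a - b) ^ 2 := by
  linear_combination (- (b*r^2) + b^3*r^4 - a*q^2 + a^3*q^4) * H
    + (- r^3 + r^5 + q*r^2 - q*r^6 + q^2*r - q^2*r^3 + q^2*r^5 - q^3 - q^3*r^2 + q^5 + q^5*r^2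
        - q^6*r + 2*b^2*r^3 - 2*b^2*q*r^2 + b^2*q*r^6 - b^2*q*r^8 - b^2*q^2*r^5 + b^2*q^2*r^7
        - b^2*q^3*r^6 + 2*b^2*q^4*r^5 - b^2*q^5*r^4 - a*b*r^3 + a*b*q*r^2 - a*b*q*r^6
        + a*b*q^2*r - a*b*q^3 + a*b*q^3*r^4 + a*b*q^4*r^3 - a*b*q^6*r - 2*a^2*q^2*r + 2*a^2*q^3
        - a^2*q^4*r^5 - a^2*q^5*r^2 + 2*a^2*q^5*r^4 + a^2*q^6*r - a^2*q^6*r^3 + a^2*q^7*r^2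
        - a^2*q^8*r) * hab
    + (r^3 - r^5 - q*r^2 + q*r^4 - q^2*r + q^3 + q^4*r - q^5 - 2*b^2*r^3 + b^2*r^5 - b^2*r^7
        + 2*b^2*q*r^2 - 2*b^2*q*r^4 + b^2*q*r^6 + 2*b^2*q^2*r^3 - b^2*q^2*r^5 - b^2*q^3*r^2
        + 2*b^2*q^3*r^4 - b^2*q^4*r^3 + b^4*r^3 - b^4*q*r^2 + b^4*q*r^4 - b^4*q^2*r^3
        + 2*a^2*q^2*r - a^2*q^2*r^3 - 2*a^2*q^3 + 2*a^2*q^3*r^2 - a^2*q^3*r^4 - 2*a^2*q^4*r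
        + 2*a^2*q^4*r^3 + a^2*q^5 - a^2*q^5*r^2 + a^2*q^6*r - a^2*q^7 - a^4*q^2*r + a^4*q^3
        - a^4*q^3*r^2 + a^4*q^4*r) * hqr

lemma stmt_10_aux2 (a b q r : ℝ) (hab : a * b = 1) (hqr : q * r = 1) (hc : q - r ≠ 0)
    (h : (a * q ^ 4 - b * r ^ 4) / (q - r)
        = ((q ^ 3 - r ^ 3) / (q - r)) * ((a - b) / (q - r))) :
    ((a ^ 2 * q ^ 4 - b ^ 2 * r ^ 4) / (q - r)) * ((a * q - b * r) / (q - r)) *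
        ((a * q ^ 3 - b * r ^ 3) / (q - r) - ((q ^ 2 - r ^ 2) / (q - r)) * ((a - b) / (q - r)))
      = ((a ^ 2 * q ^ 2 - b ^ 2 * r ^ 2) / (q - r)) * ((a - b) / (q - r)) ^ 2 := by
  have hinv : (q - r) * (q - r)⁻¹ = 1 := mul_inv_cancel₀ hc
  have H : (a * q ^ 4 - b * r ^ 4) * (q - r) = (q ^ 3 - r ^ 3) * (a - b) := by
    linear_combination (q - r) ^ 2 * h +
      ((q ^ 3 - r ^ 3) * (a - b) * (1 + (q - r) * (q - r)⁻¹)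
        - (a * q ^ 4 - b * r ^ 4) * (q - r)) * hinv
  have key := stmt_10_aux a b q r hab hqr H
  linear_combination ((q - r)⁻¹) ^ 4 * key +
    (((a ^ 2 * q ^ 2 - b ^ 2 * r ^ 2) * (a - b) ^ 2
      - (a ^ 2 * q ^ 4 - b ^ 2 * r ^ 4) * (a * q - b * r) * (a * q ^ 3 - b * r ^ 3))
      * ((q - r)⁻¹) ^ 3) * hinv

/-- The key computation in the proof of Lemma 5.11: assuming `[n+4] = [3]·[n]`,
`⟨C,C⟩·⟨D,D⟩ = |⟨C,D⟩|²`; equivalently `[2n+4]·[n+1]·([n+3]−[2]·[n]) = [2n+2]·[n]²`. -/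
theorem stmt_10 (q : ℝ) (hq : 1 < q) (n : ℕ) (hn : 2 ≤ n)
    (qi : ℕ → ℝ) (hqi : ∀ m : ℕ, qi m = (q ^ (m : ℤ) - q ^ (-(m : ℤ))) / (q - q⁻¹))
    (h : qi (n + 4) = qi 3 * qi n) :
    (qi 2 * qi (2 * n + 2) ^ 2 * qi (2 * n + 4)
          / (qi (n + 1) * qi (n + 2) ^ 2 * qi (2 * n + 3))) *
        (qi (n + 1) ^ 2 * qi (2 * n + 2) * (qi (n + 3) - qi 2 * qi n)
          / (qi 2 * qi n ^ 2 * qi (2 * n + 3)))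
      = (qi (2 * n + 2) ^ 2 / (qi (n + 2) * qi (2 * n + 3))) ^ 2
    ∧ qi (2 * n + 4) * qi (n + 1) * (qi (n + 3) - qi 2 * qi n)
      = qi (2 * n + 2) * qi n ^ 2 := by
  have hq0 : (0:ℝ) < q := lt_trans one_pos hq
  have hqne : q ≠ 0 := ne_of_gt hq0
  have hqr : q * q⁻¹ = 1 := mul_inv_cancel₀ hqne
  have hrlt : q⁻¹ < 1 := by
    rw [inv_lt_one_iff₀]; right; exact hq
  have hr0 : (0:ℝ) < q⁻¹ := by positivity
  have hcpos : (0:ℝ) < q - q⁻¹ := by linarith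
  have hcne : q - q⁻¹ ≠ 0 := ne_of_gt hcpos
  have hqi' : ∀ m : ℕ, qi m = (q ^ m - q⁻¹ ^ m) / (q - q⁻¹) := by
    intro m
    rw [hqi m, zpow_neg, zpow_natCast, inv_pow]
  have hpos : ∀ m : ℕ, 1 ≤ m → 0 < qi m := by
    intro m hm
    rw [hqi' m]
    apply div_pos _ hcpos
    have : q⁻¹ ^ m < q ^ m := by
      calc q⁻¹ ^ m < 1 := pow_lt_one₀ (le_of_lt hr0) hrlt (by omega)
        _ ≤ q ^ m := one_le_pow₀ (le_of_lt hq)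
    linarith
  have hab : q ^ n * q⁻¹ ^ n = 1 := by rw [← mul_pow, hqr, one_pow]
  have E1 : ∀ k : ℕ, qi (n + k) = (q ^ n * q ^ k - q⁻¹ ^ n * q⁻¹ ^ k) / (q - q⁻¹) := by
    intro k; rw [hqi', pow_add, pow_add]
  have E2 : ∀ k : ℕ,
      qi (2 * n + k) = ((q ^ n) ^ 2 * q ^ k - (q⁻¹ ^ n) ^ 2 * q⁻¹ ^ k) / (q - q⁻¹) := by
    intro k
    rw [hqi', pow_add, pow_add, two_mul, pow_add, pow_add]; ring_nf
  rw [E1 4, hqi' 3, hqi' n] at h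
  have key := stmt_10_aux2 (q ^ n) (q⁻¹ ^ n) q q⁻¹ hab hqr hcne (by linear_combination h)
  have goal2 : qi (2 * n + 4) * qi (n + 1) * (qi (n + 3) - qi 2 * qi n)
      = qi (2 * n + 2) * qi n ^ 2 := by
    rw [E2 4, E2 2, E1 1, E1 3, hqi' 2, hqi' n]
    linear_combination key
  refine ⟨?_, goal2⟩
  have h2 : qi 2 ≠ 0 := ne_of_gt (hpos 2 (by omega))
  have hnne : qi n ≠ 0 := ne_of_gt (hpos n (by omega))
  have hn1 : qi (n + 1) ≠ 0 := ne_of_gt (hpos (n + 1) (by omega))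
  have hn2 : qi (n + 2) ≠ 0 := ne_of_gt (hpos (n + 2) (by omega))
  have h2n3 : qi (2 * n + 3) ≠ 0 := ne_of_gt (hpos (2 * n + 3) (by omega))
  rw [div_mul_div_comm, div_pow, div_eq_div_iff
    (by simp [hn1, hn2, h2n3, h2, hnne])
    (by simp [hn2, h2n3])]
  linear_combination (qi 2 * qi (n + 1) * qi (n + 2) ^ 2 * qi (2 * n + 3) ^ 2
    * qi (2 * n + 2) ^ 3) * goal2
end

section
/- The largest eigenvalue of the adjacency matrix of the graph H₀^p equals √((5+√13)/2). That is, √((5+√13)/2) is an eigenvalue of this real symmetric matrix, and every real eigenvalue of it is at most √((5+√13)/2). -/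
/-- The edges of the Haagerup principal graph `H₀^p`, with vertices
`c₀,c₁,c₂,c₃,u₁,u₂,s₁,s₂,t₁,t₂` numbered `0,…,9`. -/
def H0edges : List (Fin 10 × Fin 10) :=
  [(0, 1), (1, 2), (2, 3), (3, 4), (3, 5), (4, 6), (5, 7), (6, 8), (7, 9)]

/-- The adjacency matrix of the Haagerup principal graph `H₀^p`. -/
def H0adj : Matrix (Fin 10) (Fin 10) ℝ :=
  Matrix.of fun i j => if (i, j) ∈ H0edges ∨ (j, i) ∈ H0edges then 1 else 0

/-!
The number `d = √((5 + √13) / 2)` is a root of `x ^ 4 - 5 x ^ 2 + 3`, and this is exactly the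
condition for an explicit vector `w` with positive entries to be a `d`-eigenvector of the
(entrywise nonnegative) adjacency matrix `A`. Any real eigenvalue `μ` with eigenvector `v` then
satisfies `|μ| ≤ d` (Collatz–Wielandt): at an index `i` maximising `|v j| / w j`, the triangle
inequality gives `|μ| |v i| ≤ (A |v|) i ≤ (|v i| / w i) (A w) i = d |v i|`.
-/

namespace Matrix

variable {n : Type*} [Fintype n] {A : Matrix n n ℝ}

theorem abs_mulVec_le_mulVec_abs (hA : ∀ i j, 0 ≤ A i j) (v : n → ℝ) (i : n) :
    |(A *ᵥ v) i| ≤ (A *ᵥ |v|) i :=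
  calc |∑ j, A i j * v j| ≤ ∑ j, |A i j * v j| := Finset.abs_sum_le_sum_abs _ _
    _ = ∑ j, A i j * |v j| := by simp only [abs_mul, abs_of_nonneg (hA i _)]

theorem abs_le_of_mulVec_eq_smul_of_pos (hA : ∀ i j, 0 ≤ A i j) {w : n → ℝ} (hw : ∀ i, 0 < w i)
    {d : ℝ} (hAw : A *ᵥ w = d • w) {μ : ℝ} {v : n → ℝ} (hv0 : v ≠ 0) (hv : A *ᵥ v = μ • v) :
    |μ| ≤ d := by
  obtain ⟨k, hk⟩ := Function.ne_iff.mp hv0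
  obtain ⟨i, -, hi⟩ := Finset.exists_max_image Finset.univ (fun j => |v j| / w j) ⟨k, by simp⟩
  set c := |v i| / w i
  have hci : c * w i = |v i| := div_mul_cancel₀ _ (hw i).ne'
  have hvc : |v| ≤ c • w := fun j => (div_le_iff₀ (hw j)).mp (hi j (by simp))
  have hvi_pos : 0 < |v i| := by
    have : 0 < |v k| / w k := div_pos (abs_pos.mpr hk) (hw k)
    exact (div_pos_iff_of_pos_right (hw i)).mp (this.trans_le (hi k (by simp)))
  have key : |μ| * |v i| ≤ d * |v i| :=
    calc |μ| * |v i| = |(A *ᵥ v) i| := by simp [hv, abs_mul]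
      _ ≤ (A *ᵥ |v|) i := abs_mulVec_le_mulVec_abs hA v i
      _ ≤ (A *ᵥ (c • w)) i :=
          Finset.sum_le_sum fun j _ => mul_le_mul_of_nonneg_left (hvc j) (hA i j)
      _ = d * |v i| := by
          rw [mulVec_smul, hAw, ← hci]; simp only [Pi.smul_apply, smul_eq_mul]; ring
  exact le_of_mul_le_mul_right key hvi_pos

end Matrix

open Matrix

theorem H0adj_nonneg (i j : Fin 10) : 0 ≤ H0adj i j := by
  simp only [H0adj, Matrix.of_apply]
  split_ifs <;> norm_num

/-- Propagating the eigen-equations inwards from the leaf `c₀` forces these entries; the one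
remaining equation, at the branch vertex `c₃`, reads `d ^ 4 = 5 * d ^ 2 - 3`. -/
def haagerupVec (d : ℝ) : Fin 10 → ℝ :=
  ![1, d, d ^ 2 - 1, d ^ 3 - 2 * d, d ^ 2 - 1, d ^ 2 - 1, d, d, 1, 1]

theorem H0adj_mulVec_haagerupVec {d : ℝ} (hd : d ^ 4 = 5 * d ^ 2 - 3) :
    H0adj *ᵥ haagerupVec d = d • haagerupVec d := by
  funext i
  fin_cases i <;>
    simp only [mulVec, dotProduct, Fin.sum_univ_succ, Fin.sum_univ_zero] <;>
    simp +decide [H0adj, H0edges, haagerupVec] <;>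
    grind

theorem haagerupVec_pos {d : ℝ} (hd : 0 < d) (hd2 : 2 < d ^ 2) (i : Fin 10) :
    0 < haagerupVec d i := by
  have h2 : 0 < d ^ 2 - 1 := by linarith
  have h3 : 0 < d ^ 3 - 2 * d := by nlinarith
  fin_cases i
  exacts [one_pos, hd, h2, h3, h2, h2, hd, hd, one_pos, one_pos]

/-- The largest eigenvalue of the adjacency matrix of `H₀^p` is `√((5+√13)/2)`. -/
theorem stmt_16 :
    (∃ v : Fin 10 → ℝ, v ≠ 0 ∧
        H0adj.mulVec v = Real.sqrt ((5 + Real.sqrt 13) / 2) • v) ∧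
    (∀ μ : ℝ, (∃ v : Fin 10 → ℝ, v ≠ 0 ∧ H0adj.mulVec v = μ • v) →
        μ ≤ Real.sqrt ((5 + Real.sqrt 13) / 2)) := by
  set d := Real.sqrt ((5 + Real.sqrt 13) / 2)
  have hd_pos : 0 < d := Real.sqrt_pos.2 (by positivity)
  have hd_sq : d ^ 2 = (5 + Real.sqrt 13) / 2 := Real.sq_sqrt (by positivity)
  have hd_min : d ^ 4 = 5 * d ^ 2 - 3 := by
    have : Real.sqrt 13 ^ 2 = 13 := Real.sq_sqrt (by norm_num)
    nlinarith
  have hd_sq_gt : 2 < d ^ 2 := by rw [hd_sq]; linarith [Real.sqrt_nonneg 13]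
  have hw := H0adj_mulVec_haagerupVec hd_min
  have hw_pos := haagerupVec_pos hd_pos hd_sq_gt
  refine ⟨⟨haagerupVec d, fun h => (hw_pos 0).ne' (congrFun h 0), hw⟩, ?_⟩
  rintro μ ⟨v, hv0, hv⟩
  exact (le_abs_self μ).trans (abs_le_of_mulVec_eq_smul_of_pos H0adj_nonneg hw_pos hw hv0 hv)
end

section
/- Let d be the largest eigenvalue of the adjacency matrix of the graph H₁^p. Then d > 2 and d⁶ − 8d⁴ + 17d² − 5 = 0; consequently d² is the largest root of x³ − 8x² + 17x − 5. -/
/-- The edges of the extended Haagerup principal graph `H₁^p`, with vertices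
`c₀,…,c₇,u₁,u₂,s₁,s₂,t₁,t₂` numbered `0,…,13`. -/
def H1edges : List (Fin 14 × Fin 14) :=
  [(0, 1), (1, 2), (2, 3), (3, 4), (4, 5), (5, 6), (6, 7),
   (7, 8), (7, 9), (8, 10), (9, 11), (10, 12), (11, 13)]

/-- The adjacency matrix of the extended Haagerup principal graph `H₁^p`. -/
def H1adj : Matrix (Fin 14) (Fin 14) ℝ :=
  Matrix.of fun i j => if (i, j) ∈ H1edges ∨ (j, i) ∈ H1edges then 1 else 0

/-! Propagating the eigenvalue equations of a tree from the leaves determines an eigenvector up to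
scale: for an eigenvalue `t` with `t (t² - 2) ≠ 0` the two arms force equal values at the leaves
`t₁, t₂`, and then every entry is a polynomial in `t` times that value (`H1vec t`). The one
equation left over, at `c₀`, reads `t (t² - 1) (t² - 2) q(t²) = 0` with
`q(x) = x³ - 8x² + 17x - 5`. As `q` has a root `r > 4`, `√r` is an eigenvalue, so `d > 2`, and
then `q(d²) = 0`. Finally `q(b) - q(a) = (b - a)(b² + ab + a² - 8(a + b) + 17)` with the second
factor positive for `a, b > 4`, so `q` has no root above `d²`. -/

open Matrix

theorem H1adj_mulVec (v : Fin 14 → ℝ) :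
    H1adj *ᵥ v = ![v 1, v 0 + v 2, v 1 + v 3, v 2 + v 4, v 3 + v 5, v 4 + v 6, v 5 + v 7,
      v 6 + v 8 + v 9, v 7 + v 10, v 7 + v 11, v 8 + v 12, v 9 + v 13, v 10, v 11] := by
  ext i
  fin_cases i <;> simp [H1adj, H1edges, mulVec, dotProduct, Fin.sum_univ_succ, add_assoc]

def indexCubic (x : ℝ) : ℝ := x ^ 3 - 8 * x ^ 2 + 17 * x - 5

def H1vec (t : ℝ) : Fin 14 → ℝ :=
  ![t^10 - 10*t^8 + 34*t^6 - 46*t^4 + 22*t^2 - 2,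
    t^9 - 9*t^7 + 26*t^5 - 27*t^3 + 8*t,
    t^8 - 8*t^6 + 19*t^4 - 14*t^2 + 2,
    t^7 - 7*t^5 + 13*t^3 - 6*t,
    t^6 - 6*t^4 + 8*t^2 - 2,
    t^5 - 5*t^3 + 4*t,
    t^4 - 4*t^2 + 2,
    t^3 - 2*t,
    t^2 - 1, t^2 - 1, t, t, 1, 1]

theorem H1vec_ne_zero (t : ℝ) : H1vec t ≠ 0 :=
  fun h => one_ne_zero (congrFun h 12)

theorem smul_H1vec_sub_H1adj_mulVec (t : ℝ) :
    t • H1vec t - H1adj *ᵥ H1vec t =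
      Pi.single 0 (t * (t ^ 2 - 1) * (t ^ 2 - 2) * indexCubic (t ^ 2)) := by
  rw [H1adj_mulVec]
  ext i
  fin_cases i <;> simp [H1vec, indexCubic] <;> ring

theorem H1adj_mulVec_H1vec_eq_smul_iff (t : ℝ) :
    H1adj *ᵥ H1vec t = t • H1vec t ↔
      t * (t ^ 2 - 1) * (t ^ 2 - 2) * indexCubic (t ^ 2) = 0 := by
  rw [eq_comm, ← sub_eq_zero, smul_H1vec_sub_H1adj_mulVec, Pi.single_eq_zero_iff]

theorem eq_smul_H1vec {v : Fin 14 → ℝ} {t : ℝ} (hv : H1adj *ᵥ v = t • v)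
    (ht : t * (t ^ 2 - 2) ≠ 0) : v = v 12 • H1vec t := by
  have e : ∀ i, (H1adj *ᵥ v) i = t * v i := fun i => by simp [hv]
  simp only [H1adj_mulVec] at e
  have e1 := e 1; have e2 := e 2; have e3 := e 3; have e4 := e 4; have e5 := e 5
  have e6 := e 6; have e7 := e 7; have e8 := e 8; have e9 := e 9; have e10 := e 10
  have e11 := e 11; have e12 := e 12; have e13 := e 13
  simp only [cons_val_one, cons_val_zero, cons_val] at e1 e2 e3 e4 e5 e6 e7 e8 e9 e10 e11 e12 e13
  have h13 : v 13 = v 12 := by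
    have h : t * (t ^ 2 - 2) * (v 13 - v 12) = 0 := by
      linear_combination e8 - e9 + t * (e10 - e11) + (t ^ 2 - 1) * (e12 - e13)
    simpa [ht, sub_eq_zero] using h
  have h10 : v 10 = t * v 12 := e12
  have h11 : v 11 = t * v 12 := by rw [e13, h13]
  have h8 : v 8 = (t ^ 2 - 1) * v 12 := by linear_combination e10 + t * h10
  have h9 : v 9 = (t ^ 2 - 1) * v 12 := by linear_combination e11 + t * h11 - h13
  have h7 : v 7 = (t ^ 3 - 2 * t) * v 12 := by linear_combination e8 + t * h8 - h10
  have h6 : v 6 = (t^4 - 4*t^2 + 2) * v 12 := by linear_combination e7 + t * h7 - h8 - h9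
  have h5 : v 5 = (t^5 - 5*t^3 + 4*t) * v 12 := by linear_combination e6 + t * h6 - h7
  have h4 : v 4 = (t^6 - 6*t^4 + 8*t^2 - 2) * v 12 := by linear_combination e5 + t * h5 - h6
  have h3 : v 3 = (t^7 - 7*t^5 + 13*t^3 - 6*t) * v 12 := by linear_combination e4 + t * h4 - h5
  have h2 : v 2 = (t^8 - 8*t^6 + 19*t^4 - 14*t^2 + 2) * v 12 := by
    linear_combination e3 + t * h3 - h4
  have h1 : v 1 = (t^9 - 9*t^7 + 26*t^5 - 27*t^3 + 8*t) * v 12 := by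
    linear_combination e2 + t * h2 - h3
  have h0 : v 0 = (t^10 - 10*t^8 + 34*t^6 - 46*t^4 + 22*t^2 - 2) * v 12 := by
    linear_combination e1 + t * h1 - h2
  ext i
  fin_cases i <;> simp [H1vec, h0, h1, h2, h3, h4, h5, h6, h7, h8, h9, h10, h11, h13] <;> ring

theorem exists_indexCubic_root_gt_four : ∃ r, 4 < r ∧ indexCubic r = 0 := by
  have hcont : ContinuousOn indexCubic (Set.Icc 4 5) := by unfold indexCubic; fun_prop
  obtain ⟨r, hr, hr0⟩ := intermediate_value_Ioo (by norm_num) hcont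
    (show (0 : ℝ) ∈ Set.Ioo (indexCubic 4) (indexCubic 5) by norm_num [indexCubic])
  exact ⟨r, hr.1, hr0⟩

theorem indexCubic_root_le {a b : ℝ} (ha : 4 < a) (hqa : indexCubic a = 0)
    (hqb : indexCubic b = 0) : b ≤ a := by
  by_contra! hab
  have hfactor : (b - a) * (b ^ 2 + a * b + a ^ 2 - 8 * b - 8 * a + 17) = 0 := by
    unfold indexCubic at hqa hqb; linear_combination hqb - hqa
  have hquad : 0 < b ^ 2 + a * b + a ^ 2 - 8 * b - 8 * a + 17 := by
    nlinarith [mul_pos (sub_pos.2 ha) (sub_pos.2 (ha.trans hab))]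
  exact (mul_pos (sub_pos.2 hab) hquad).ne' hfactor

/-- If `d` is the largest eigenvalue of the adjacency matrix of `H₁^p`, then `d > 2` and
`d⁶ − 8d⁴ + 17d² − 5 = 0`; consequently `d²` is the largest root of `x³ − 8x² + 17x − 5`. -/
theorem stmt_17 (d : ℝ)
    (hex : ∃ v : Fin 14 → ℝ, v ≠ 0 ∧ H1adj.mulVec v = d • v)
    (hmax : ∀ μ : ℝ, (∃ v : Fin 14 → ℝ, v ≠ 0 ∧ H1adj.mulVec v = μ • v) → μ ≤ d) :
    2 < d ∧ d ^ 6 - 8 * d ^ 4 + 17 * d ^ 2 - 5 = 0 ∧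
    ((d ^ 2) ^ 3 - 8 * (d ^ 2) ^ 2 + 17 * d ^ 2 - 5 = 0 ∧
      ∀ x : ℝ, x ^ 3 - 8 * x ^ 2 + 17 * x - 5 = 0 → x ≤ d ^ 2) := by
  obtain ⟨r, hr4, hr⟩ := exists_indexCubic_root_gt_four
  have hsqrt : 2 < √r := by rw [Real.lt_sqrt zero_le_two]; linarith
  have hd : 2 < d := hsqrt.trans_le <| hmax _ ⟨H1vec √r, H1vec_ne_zero _,
    (H1adj_mulVec_H1vec_eq_smul_iff _).2 (by rw [Real.sq_sqrt (by linarith), hr, mul_zero])⟩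
  have hd4 : 4 < d ^ 2 := by nlinarith
  have hd2 : 0 < d ^ 2 - 2 := by linarith
  obtain ⟨v, hv0, hv⟩ := hex
  have hvd := eq_smul_H1vec hv (mul_pos (by linarith) hd2).ne'
  have hv12 : v 12 ≠ 0 := fun h => hv0 (by simpa [h] using hvd)
  have hH1vec : H1adj *ᵥ H1vec d = d • H1vec d := by
    rw [hvd, mulVec_smul, smul_comm] at hv
    exact smul_right_injective _ hv12 hv
  have hcubic : indexCubic (d ^ 2) = 0 := by
    refine (mul_eq_zero.1 ((H1adj_mulVec_H1vec_eq_smul_iff d).1 hH1vec)).resolve_left ?_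
    exact (mul_pos (mul_pos (by linarith) (by linarith)) hd2).ne'
  refine ⟨hd, ?_, hcubic, fun x hx => indexCubic_root_le (by linarith) hcubic hx⟩
  unfold indexCubic at hcubic
  linear_combination hcubic
end
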